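/- Suppose m and n are distinct odd integers with m, n ≥ 3, and that for all distinct x, y ∈ G the faces of the darts (x,y) and (y,x) are simple cycles, one of length m and the other of length n. Then the set of bijections σ : G → G with σ(0) = 0 that are automorphisms of the embedding (orientation-preserving or orientation-reversing) has cardinality at most mn. -/

import Mathlib

/-!
Face lengths are minimal periods of the face-tracing map. An orientation-preserving automorphism
`σ` fixing `0` commutes with `ρ₀` and preserves face lengths, so it is determined by `σ a` for a
fixed `a ≠ 0`, which must lie in the class of those `x ≠ 0` for which the face of `(0, x)` is as
long as that of `(0, a)`; `ρ₀` maps this class into its complement, so it has at most `mn`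
elements.

An orientation-reversing `σ` fixing `0` does not exist. It is an involution and maps the face of
`(x, y)` backwards onto the face of `(σ y, σ x)`. A nonzero fixed point `b` would give the faces
of `(0, b)` and `(b, 0)` equal lengths. Otherwise, for `x ≠ 0` the odd face of `(x, σ x)` is
reflected onto itself, so its middle vertex is fixed, hence is `0`, and the vertex `u` before it
satisfies `σ u = ρ₀ u` and determines `x`. Counting gives `σ = ρ₀` off `0`, so `ρ₀² = 1` there,
which is impossible for a cycle of length `2mn > 2`.
-/

/-- The face-tracing map: it sends the dart `(x, y)` to `(y, y + ρ₀(x − y))`. -/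
def faceMap {G : Type*} [AddCommGroup G] (ρ₀ : G → G) : G × G → G × G :=
  fun p => (p.2, p.2 + ρ₀ (p.1 - p.2))

/-- The face of the dart `p` (its orbit under the face-tracing map) is a simple cycle of
length `k`: it consists of exactly `k` darts whose first components are pairwise distinct. -/
def IsSimpleCycleFace {G : Type*} [AddCommGroup G] (ρ₀ : G → G) (k : ℕ) (p : G × G) : Prop :=
  (faceMap ρ₀)^[k] p = p ∧
    ∀ i < k, ∀ j < k, ((faceMap ρ₀)^[i] p).1 = ((faceMap ρ₀)^[j] p).1 → i = j

open Function

theorem eq_of_commute_of_eq {α : Type*} [Zero α] {f g ρ : α → α} {a : α}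
    (hcyc : ∀ b, b ≠ 0 → ∃ k, ρ^[k] a = b) (hf : Function.Commute f ρ)
    (hg : Function.Commute g ρ)
    (h0 : f 0 = g 0) (ha : f a = g a) : f = g := by
  funext b
  rcases eq_or_ne b 0 with rfl | hb
  · exact h0
  · obtain ⟨k, rfl⟩ := hcyc b hb
    rw [(hf.iterate_right k).eq, (hg.iterate_right k).eq, ha]

section Faces

variable {G : Type*} [AddCommGroup G]

/-- `σ` carries the rotation `ρ` to `τ` at every pair of vertices: orientation-preserving
automorphisms are those with `τ = ρ`, orientation-reversing ones those with `τ = ρ⁻¹`. -/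
def CarriesRotation (σ ρ τ : G → G) : Prop :=
  ∀ x y, σ (x + ρ (y - x)) = σ x + τ (σ y - σ x)

theorem IsSimpleCycleFace.minimalPeriod_eq {ρ : G → G} {k : ℕ} {p : G × G}
    (h : IsSimpleCycleFace ρ k p) (hk : 0 < k) : minimalPeriod (faceMap ρ) p = k := by
  have hper : IsPeriodicPt (faceMap ρ) k p := h.1
  have hpos := hper.minimalPeriod_pos hk
  have hle := hper.minimalPeriod_le hk
  by_contra hne
  have h0 := h.2 _ (lt_of_le_of_ne hle hne) 0 hk (by rw [iterate_minimalPeriod]; rfl)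
  omega

theorem minimalPeriod_faceMap_zero_apply {ρ : G → G} {x : G}
    (hx : (x, 0) ∈ periodicPts (faceMap ρ)) :
    minimalPeriod (faceMap ρ) (0, ρ x) = minimalPeriod (faceMap ρ) (x, 0) := by
  simpa [faceMap] using minimalPeriod_apply hx

variable {σ ρ τ : G → G}

theorem carriesRotation_of_forall_ne (hρ : ρ 0 = 0) (hτ : τ 0 = 0)
    (h : ∀ x y, x ≠ y → σ (x + ρ (y - x)) = σ x + τ (σ y - σ x)) : CarriesRotation σ ρ τ := by
  intro x y
  rcases eq_or_ne x y with rfl | hxy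
  · simp [hρ, hτ]
  · exact h x y hxy

theorem CarriesRotation.semiconj (h : CarriesRotation σ ρ τ) (hσ0 : σ 0 = 0) :
    Semiconj σ ρ τ := fun y => by
  simpa [hσ0] using h 0 y

theorem CarriesRotation.semiconj_faceMap (h : CarriesRotation σ ρ ρ) :
    Semiconj (Prod.map σ σ) (faceMap ρ) (faceMap ρ) := by
  rintro ⟨x, y⟩
  simp [faceMap, h y x]

theorem CarriesRotation.minimalPeriod_faceMap_map (h : CarriesRotation σ ρ ρ) (hσ : Injective σ)
    (p : G × G) : minimalPeriod (faceMap ρ) (σ p.1, σ p.2) = minimalPeriod (faceMap ρ) p := by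
  refine minimalPeriod_eq_minimalPeriod_iff.mpr fun n => ?_
  change (faceMap ρ)^[n] (Prod.map σ σ p) = Prod.map σ σ p ↔ _
  rw [← (h.semiconj_faceMap.iterate_right n).eq]
  exact (hσ.prodMap hσ).eq_iff

end Faces

section Reversing

variable {G : Type*} [AddCommGroup G] {ρ : Equiv.Perm G} {σ : G → G}

theorem CarriesRotation.faceMap_reverse_faceMap (h : CarriesRotation σ ρ ⇑ρ⁻¹) (p : G × G) :
    faceMap ρ (σ (faceMap ρ p).2, σ (faceMap ρ p).1) = (σ p.2, σ p.1) := by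
  obtain ⟨x, y⟩ := p
  simp [faceMap, h y x]

theorem CarriesRotation.faceMap_iterate_reverse_iterate (h : CarriesRotation σ ρ ⇑ρ⁻¹)
    (k : ℕ) (p : G × G) :
    (faceMap ρ)^[k] (σ ((faceMap ρ)^[k] p).2, σ ((faceMap ρ)^[k] p).1) = (σ p.2, σ p.1) := by
  induction k generalizing p with
  | zero => rfl
  | succ k ih => rw [iterate_succ_apply, iterate_succ_apply', h.faceMap_reverse_faceMap, ih]

theorem CarriesRotation.minimalPeriod_faceMap_reverse (h : CarriesRotation σ ρ ⇑ρ⁻¹)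
    (hσ : Involutive σ) (p : G × G) :
    minimalPeriod (faceMap ρ) (σ p.2, σ p.1) = minimalPeriod (faceMap ρ) p := by
  have hrev : ∀ n q, IsPeriodicPt (faceMap ρ) n q →
      IsPeriodicPt (faceMap ρ) n (σ q.2, σ q.1) := fun n q hq => by
    rw [IsPeriodicPt, IsFixedPt]
    conv_lhs => rw [← hq.eq]
    exact h.faceMap_iterate_reverse_iterate n q
  refine minimalPeriod_eq_minimalPeriod_iff.mpr fun n => ⟨fun hp => ?_, hrev n p⟩
  simpa [hσ _] using hrev n _ hp

theorem CarriesRotation.reverse_faceMap_iterate_succ (h : CarriesRotation σ ρ ⇑ρ⁻¹)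
    (hσ : Involutive σ) {d : G × G} (hd : (σ d.2, σ d.1) = d) {c : ℕ}
    (hc : minimalPeriod (faceMap ρ) d = 2 * c + 1) :
    (σ ((faceMap ρ)^[c + 1] d).2, σ ((faceMap ρ)^[c + 1] d).1) = (faceMap ρ)^[c] d := by
  have hd_per : d ∈ periodicPts (faceMap ρ) :=
    minimalPeriod_pos_iff_mem_periodicPts.mp (by omega)
  set q := (faceMap ρ)^[c + 1] d
  have hq : minimalPeriod (faceMap ρ) (σ q.2, σ q.1) = 2 * c + 1 := by
    rw [h.minimalPeriod_faceMap_reverse hσ, minimalPeriod_apply_iterate hd_per, hc]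
  calc (σ q.2, σ q.1) = (faceMap ρ)^[2 * c + 1] (σ q.2, σ q.1) := by
        rw [← hq, iterate_minimalPeriod]
    _ = (faceMap ρ)^[c] ((faceMap ρ)^[c + 1] (σ q.2, σ q.1)) := by
        rw [← iterate_add_apply, show c + (c + 1) = 2 * c + 1 by ring]
    _ = (faceMap ρ)^[c] d := by rw [h.faceMap_iterate_reverse_iterate, hd]

theorem CarriesRotation.involutive (h : CarriesRotation σ ρ ⇑ρ⁻¹) (hσ : Injective σ)
    (hσ0 : σ 0 = 0) {a : G} (ha : a ≠ 0) (hcyc : ∀ b, b ≠ 0 → ∃ k, (⇑ρ)^[k] a = b) :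
    Involutive σ := by
  have hfwd : Semiconj σ ρ ⇑ρ⁻¹ := h.semiconj hσ0
  have hbwd : Semiconj σ ⇑ρ⁻¹ ρ := fun y => by
    simpa using congrArg ρ (hfwd (ρ⁻¹ y)).symm
  obtain ⟨s, hs⟩ := hcyc (σ a) ((hσ.ne_iff' hσ0).mpr ha)
  have haa : σ (σ a) = a := by
    rw [← hs, (hfwd.iterate_right s).eq, ← hs]
    exact LeftInverse.iterate ρ.symm_apply_apply s a
  exact congrFun (eq_of_commute_of_eq hcyc (hbwd.comp_left hfwd) Function.Commute.id_left
    (by simp [hσ0]) haa)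

theorem CarriesRotation.eq_zero_of_apply_eq (h : CarriesRotation σ ρ ⇑ρ⁻¹) (hσ : Involutive σ)
    (hσ0 : σ 0 = 0)
    (hswap : ∀ x y, x ≠ y → minimalPeriod (faceMap ρ) (y, x) ≠ minimalPeriod (faceMap ρ) (x, y))
    {b : G} (hb : σ b = b) : b = 0 := by
  by_contra hb0
  apply hswap 0 b (Ne.symm hb0)
  simpa [hb, hσ0] using h.minimalPeriod_faceMap_reverse hσ (0, b)

/-- The face of `(x, σ x)` is odd and reflected onto itself, so its middle vertex is fixed by
`σ`; the dart `(u, 0)` entering that vertex determines `x`. -/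
theorem CarriesRotation.exists_eq_faceMap_iterate (h : CarriesRotation σ ρ ⇑ρ⁻¹)
    (hσ : Involutive σ) (hσ0 : σ 0 = 0) (hρ0 : ρ 0 = 0) (hfix : ∀ v, σ v = v → v = 0)
    {x : G} (hx : x ≠ 0) (hodd : Odd (minimalPeriod (faceMap ρ) (x, σ x))) :
    ∃ u, u ≠ 0 ∧ σ u = ρ u ∧
      x = ((faceMap ρ)^[(minimalPeriod (faceMap ρ) (u, 0) + 1) / 2] (u, 0)).1 := by
  obtain ⟨c, hc⟩ := hodd
  set d := (x, σ x)
  have hd : (σ d.2, σ d.1) = d := by simp [d, hσ x]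
  have hd_per : d ∈ periodicPts (faceMap ρ) :=
    minimalPeriod_pos_iff_mem_periodicPts.mp (by omega)
  have hrefl := h.reverse_faceMap_iterate_succ hσ hd hc
  set u := ((faceMap ρ)^[c] d).1
  set v := ((faceMap ρ)^[c] d).2
  have hstep : (faceMap ρ)^[c + 1] d = (v, v + ρ (u - v)) := by
    rw [iterate_succ_apply']; rfl
  rw [hstep] at hrefl
  have hv : v = 0 := hfix v (congrArg Prod.snd hrefl)
  have hσρu : σ (ρ u) = u := by simpa [hv] using congrArg Prod.fst hrefl
  have hcd : (faceMap ρ)^[c] d = (u, 0) := Prod.ext rfl hv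
  have hlen : minimalPeriod (faceMap ρ) (u, 0) = 2 * c + 1 := by
    rw [← hcd, minimalPeriod_apply_iterate hd_per, hc]
  have hback : (faceMap ρ)^[c + 1] (u, 0) = d := by
    rw [← hcd, ← iterate_add_apply, show c + 1 + c = 2 * c + 1 by ring, ← hc,
      iterate_minimalPeriod]
  refine ⟨u, fun hu => hx ?_, ?_, ?_⟩
  · have hfixed : faceMap ρ (0, 0) = (0, 0) := by simp [faceMap, hρ0]
    rw [hu, iterate_fixed hfixed] at hback
    exact congrArg Prod.fst hback.symm
  · exact Equiv.Perm.inv_eq_iff_eq.mp ((h.semiconj hσ0 u).symm.trans hσρu)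
  · rw [hlen, show (2 * c + 1 + 1) / 2 = c + 1 by omega, hback]

theorem CarriesRotation.eqOn_of_odd [Finite G] (h : CarriesRotation σ ρ ⇑ρ⁻¹)
    (hσ : Involutive σ) (hσ0 : σ 0 = 0) (hρ0 : ρ 0 = 0) (hfix : ∀ v, σ v = v → v = 0)
    (hodd : ∀ x y, x ≠ y → Odd (minimalPeriod (faceMap ρ) (x, y))) :
    Set.EqOn σ ρ {x | x ≠ 0} := by
  set U := {u : G | u ≠ 0 ∧ σ u = ρ u}
  have hUS : U ⊆ {x | x ≠ 0} := fun u hu => hu.1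
  have hSU : {x | x ≠ 0} ⊆
      (fun u => ((faceMap ρ)^[(minimalPeriod (faceMap ρ) (u, 0) + 1) / 2] (u, 0)).1) '' U := by
    intro x hx
    have hxσ : x ≠ σ x := fun hxx => hx (hfix x hxx.symm)
    obtain ⟨u, hu0, hu, rfl⟩ := h.exists_eq_faceMap_iterate hσ hσ0 hρ0 hfix hx (hodd _ _ hxσ)
    exact ⟨u, ⟨hu0, hu⟩, rfl⟩
  have hU : U = {x | x ≠ 0} :=
    Set.eq_of_subset_of_ncard_le hUS ((Set.ncard_le_ncard hSU).trans Set.ncard_image_le)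
  intro x hx
  rw [← hU] at hx
  exact hx.2

theorem CarriesRotation.ncard_ne_zero_le_two [Finite G] (h : CarriesRotation σ ρ ⇑ρ⁻¹)
    (hσ : Injective σ) (hσ0 : σ 0 = 0) (hρ0 : ρ 0 = 0) {a : G} (ha : a ≠ 0)
    (hcyc : ∀ b, b ≠ 0 → ∃ k, (⇑ρ)^[k] a = b)
    (hswap : ∀ x y, x ≠ y → minimalPeriod (faceMap ρ) (y, x) ≠ minimalPeriod (faceMap ρ) (x, y))
    (hodd : ∀ x y, x ≠ y → Odd (minimalPeriod (faceMap ρ) (x, y))) :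
    {x : G | x ≠ 0}.ncard ≤ 2 := by
  have hinv := h.involutive hσ hσ0 ha hcyc
  have heq := h.eqOn_of_odd hinv hσ0 hρ0 (fun _ => h.eq_zero_of_apply_eq hinv hσ0 hswap) hodd
  have hρa : IsPeriodicPt ρ 2 a := by
    have hρa0 : ρ a ≠ 0 := (ρ.injective.ne_iff' hρ0).mpr ha
    calc ρ (ρ a) = σ (σ a) := by rw [heq ha, heq hρa0]
      _ = a := hinv a
  have hsub : {x : G | x ≠ 0} ⊆ {a, ρ a} := by
    intro b hb
    obtain ⟨k, rfl⟩ := hcyc b hb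
    rw [← hρa.iterate_mod_apply]
    rcases Nat.mod_two_eq_zero_or_one k with hk | hk <;> simp [hk]
  calc {x : G | x ≠ 0}.ncard ≤ ({a, ρ a} : Set G).ncard := Set.ncard_le_ncard hsub
    _ ≤ ({ρ a} : Set G).ncard + 1 := Set.ncard_insert_le _ _
    _ = 2 := by rw [Set.ncard_singleton]

end Reversing

section Preserving

variable {G : Type*} [AddCommGroup G] [Finite G] {ρ : Equiv.Perm G}

theorem ncard_carriesRotation_le {a : G} (ha : a ≠ 0)
    (hcyc : ∀ b, b ≠ 0 → ∃ k, (⇑ρ)^[k] a = b) :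
    {σ : G → G | Injective σ ∧ σ 0 = 0 ∧ CarriesRotation σ ρ ρ}.ncard ≤
      {x : G | x ≠ 0 ∧
        minimalPeriod (faceMap ρ) (0, x) = minimalPeriod (faceMap ρ) (0, a)}.ncard := by
  refine Set.ncard_le_ncard_of_injOn (fun σ => σ a) ?_ ?_
  · rintro σ ⟨hσ, hσ0, h⟩
    refine ⟨(hσ.ne_iff' hσ0).mpr ha, ?_⟩
    simpa [hσ0] using h.minimalPeriod_faceMap_map hσ (0, a)
  · rintro σ ⟨-, hσ0, hσ⟩ τ ⟨-, hτ0, hτ⟩ hστ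
    exact eq_of_commute_of_eq hcyc (hσ.semiconj hσ0) (hτ.semiconj hτ0) (hσ0.trans hτ0.symm) hστ

/-- `ρ` moves every `x ≠ 0` out of the class of `x`, because the face of `(0, ρ x)` is that
of `(x, 0)`. -/
theorem two_mul_ncard_minimalPeriod_faceMap_eq_le (hρ0 : ρ 0 = 0)
    (hswap : ∀ x y, x ≠ y → minimalPeriod (faceMap ρ) (y, x) ≠ minimalPeriod (faceMap ρ) (x, y))
    (hodd : ∀ x y, x ≠ y → Odd (minimalPeriod (faceMap ρ) (x, y))) (a : G) :
    2 * {x : G | x ≠ 0 ∧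
        minimalPeriod (faceMap ρ) (0, x) = minimalPeriod (faceMap ρ) (0, a)}.ncard ≤
      {x : G | x ≠ 0}.ncard := by
  set C := {x : G | x ≠ 0 ∧
    minimalPeriod (faceMap ρ) (0, x) = minimalPeriod (faceMap ρ) (0, a)}
  have hdisj : Disjoint C (ρ '' C) := by
    rw [Set.disjoint_left]
    rintro _ ⟨-, hx⟩ ⟨y, ⟨hy0, hy⟩, rfl⟩
    have hper : (y, 0) ∈ periodicPts (faceMap ρ) :=
      minimalPeriod_pos_iff_mem_periodicPts.mp (hodd y 0 hy0).pos
    apply hswap 0 y (Ne.symm hy0)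
    rw [← minimalPeriod_faceMap_zero_apply hper, hx, hy]
  have hsub : C ∪ ρ '' C ⊆ {x | x ≠ 0} := by
    rintro _ (⟨hx, -⟩ | ⟨y, ⟨hy, -⟩, rfl⟩)
    exacts [hx, (ρ.injective.ne_iff' hρ0).mpr hy]
  calc 2 * C.ncard = (C ∪ ρ '' C).ncard := by
        rw [Set.ncard_union_eq hdisj, Set.ncard_image_of_injective _ ρ.injective, two_mul]
    _ ≤ _ := Set.ncard_le_ncard hsub

end Preserving

/-- Suppose `m` and `n` are distinct odd integers with `m, n ≥ 3`, `G` is a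
finite abelian group of order `2mn+1`, `ρ₀` is a permutation of `G` fixing `0` acting as a single
cycle of length `2mn` on `G \ {0}`, and for all distinct `x, y ∈ G` the faces of the darts
`(x,y)` and `(y,x)` are simple cycles, one of length `m` and the other of length `n`.  Then the
set of bijections `σ : G → G` with `σ(0) = 0` that are automorphisms of the embedding
(orientation-preserving or orientation-reversing) has cardinality at most `mn`. -/
theorem automorphisms_fixing_zero_card_le
    (m n : ℕ) (hm : 3 ≤ m) (hn : 3 ≤ n) (hmo : Odd m) (hno : Odd n) (hmn : m ≠ n)
    (G : Type*) [AddCommGroup G] [Fintype G] (hcard : Fintype.card G = 2 * m * n + 1)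
    (ρ₀ : Equiv.Perm G) (hρ0 : ρ₀ 0 = 0)
    (hcyc : ∀ a b : G, a ≠ 0 → b ≠ 0 → ∃ k : ℕ, (ρ₀ ^ k) a = b)
    (hfaces : ∀ x y : G, x ≠ y →
      (IsSimpleCycleFace ⇑ρ₀ m (x, y) ∧ IsSimpleCycleFace ⇑ρ₀ n (y, x)) ∨
      (IsSimpleCycleFace ⇑ρ₀ n (x, y) ∧ IsSimpleCycleFace ⇑ρ₀ m (y, x))) :
    {σ : G → G | Function.Bijective σ ∧ σ 0 = 0 ∧
      ((∀ x y : G, x ≠ y → σ (x + ρ₀ (y - x)) = σ x + ρ₀ (σ y - σ x)) ∨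
       (∀ x y : G, x ≠ y → σ (x + ρ₀ (y - x)) = σ x + ρ₀⁻¹ (σ y - σ x)))}.ncard
      ≤ m * n := by
  have hlen : ∀ x y, x ≠ y →
      (minimalPeriod (faceMap ρ₀) (x, y) = m ∧ minimalPeriod (faceMap ρ₀) (y, x) = n) ∨
      (minimalPeriod (faceMap ρ₀) (x, y) = n ∧ minimalPeriod (faceMap ρ₀) (y, x) = m) := by
    intro x y hxy
    rcases hfaces x y hxy with ⟨h1, h2⟩ | ⟨h1, h2⟩
    · exact .inl ⟨h1.minimalPeriod_eq (by omega), h2.minimalPeriod_eq (by omega)⟩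
    · exact .inr ⟨h1.minimalPeriod_eq (by omega), h2.minimalPeriod_eq (by omega)⟩
  have hswap : ∀ x y, x ≠ y →
      minimalPeriod (faceMap ρ₀) (y, x) ≠ minimalPeriod (faceMap ρ₀) (x, y) := fun x y hxy => by
    rcases hlen x y hxy with ⟨h1, h2⟩ | ⟨h1, h2⟩ <;> omega
  have hodd : ∀ x y, x ≠ y → Odd (minimalPeriod (faceMap ρ₀) (x, y)) := fun x y hxy => by
    rcases hlen x y hxy with ⟨h1, -⟩ | ⟨h1, -⟩ <;> rwa [h1]
  have hS : {x : G | x ≠ 0}.ncard = 2 * m * n := by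
    rw [← Set.compl_singleton_eq, Set.ncard_compl, Set.ncard_singleton, Nat.card_eq_fintype_card,
      hcard, Nat.add_sub_cancel]
  obtain ⟨a, ha⟩ : {x : G | x ≠ 0}.Nonempty :=
    Set.nonempty_of_ncard_ne_zero (by rw [hS]; positivity)
  have hcyc' : ∀ b, b ≠ 0 → ∃ k, (⇑ρ₀)^[k] a = b := fun b hb => by
    simpa only [Equiv.Perm.coe_pow] using hcyc a b ha hb
  calc _ ≤ {σ : G → G | Injective σ ∧ σ 0 = 0 ∧ CarriesRotation σ ρ₀ ρ₀}.ncard := by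
        refine Set.ncard_le_ncard ?_
        rintro σ ⟨hσ, hσ0, hpres | hrev⟩
        · exact ⟨hσ.1, hσ0, carriesRotation_of_forall_ne hρ0 hρ0 hpres⟩
        · have hρ0' : ρ₀⁻¹ 0 = 0 := Equiv.Perm.inv_eq_iff_eq.mpr hρ0.symm
          have := (carriesRotation_of_forall_ne hρ0 hρ0' hrev).ncard_ne_zero_le_two hσ.1 hσ0 hρ0
            ha hcyc' hswap hodd
          nlinarith
    _ ≤ _ := ncard_carriesRotation_le ha hcyc'
    _ ≤ m * n := by linarith [two_mul_ncard_minimalPeriod_faceMap_eq_le hρ0 hswap hodd a]
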